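/- arXiv:2508.06920 — 2 statements merged into one kernel-verified Lean document; each statement's English description precedes it below -/
import Mathlib

section
/- Let (𝔄_k)_{k∈ℕ} be an increasing sequence of sub-σ-algebras of the σ-algebra of Ω such that for every measurable set A ⊆ Ω and every ε > 0 there exist k and B ∈ 𝔄_k with μ(A Δ B) < ε. Let n(k) → ∞ and L(k) → ∞ be sequences of positive integers such that for every k the family of σ-algebras (G^{-i·n(k)}𝔄_k)_{i=1,…,L(k)} is mutually independent, where G^{-p}𝔄 = {G^{-p}(A) : A ∈ 𝔄}. Then for every finite measurable partition ξ of Ω, lim_{k→∞} (1/L(k))·H(⋁_{i=1}^{L(k)} G^{-i·n(k)}ξ) = H(ξ). In particular, G has completely positive P-entropy for P_k = {n(k), 2n(k), …, L(k)n(k)}: the limit is positive for every partition with H(ξ) > 0. -/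
open MeasureTheory Filter
open scoped ENNReal

/-- Shannon entropy of a finite family of sets (intended: a finite measurable partition),
with the convention `0 * log 0 = 0` (via `ENNReal.toReal` and `Real.log 0 = 0`). -/
noncomputable def partEntropy {Ω : Type*} [MeasurableSpace Ω] (μ : Measure Ω)
    {ι : Type*} [Fintype ι] (C : ι → Set Ω) : ℝ :=
  -∑ i, (μ (C i)).toReal * Real.log (μ (C i)).toReal

/-- `C` is a finite measurable partition of `Ω`. -/
def IsPartition {Ω : Type*} [MeasurableSpace Ω] {ι : Type*} (C : ι → Set Ω) : Prop :=
  (∀ i, MeasurableSet (C i)) ∧ (Pairwise fun i j => Disjoint (C i) (C j)) ∧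
    (⋃ i, C i) = Set.univ

/-- Entropy of the join `⋁_{j=0}^{m-1} G^{-j} ξ` of a partition `ξ = C`. -/
noncomputable def blockEntropy {Ω : Type*} [MeasurableSpace Ω] (μ : Measure Ω)
    (G : Equiv.Perm Ω) {N : ℕ} (m : ℕ) (C : Fin N → Set Ω) : ℝ :=
  partEntropy μ (fun f : Fin m → Fin N => ⋂ j : Fin m, ⇑(G ^ (j : ℕ)) ⁻¹' C (f j))

/-- Entropy of the join `⋁_{i=1}^{L} G^{-i·n} ξ` of a partition `ξ = C` along the
arithmetic progression `{n, 2n, …, Ln}`. -/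
noncomputable def progEntropy {Ω : Type*} [MeasurableSpace Ω] (μ : Measure Ω)
    (G : Equiv.Perm Ω) {N : ℕ} (n L : ℕ) (C : Fin N → Set Ω) : ℝ :=
  partEntropy μ (fun f : Fin L → Fin N => ⋂ i : Fin L, ⇑(G ^ (((i : ℕ) + 1) * n)) ⁻¹' C (f i))


/-!
Subadditivity of entropy gives `H(⋁ᵢ G^{-i n} ξ) ≤ L · H(ξ)`. For the reverse bound, approximate
`ξ` by a partition `η` that is measurable for some `𝔄 k₀`, with `μ(ξᵢ ∆ ηᵢ) ≤ δ`; then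
`H(ξ ∨ η) ≤ H(η) + N δ + 2 N² √δ`, since the off-diagonal cells of `ξ ∨ η` have mass at most `δ`
and `-x log x ≤ 2 √x`. For `k ≥ k₀` the shifts `G^{-i n(k)} η` are independent, so their join has
entropy `L · H(η)`; by the chain rule the join of the shifts of `ξ ∨ η`, which refines it, exceeds
the join of the shifts of `ξ` by at most `L · (H(ξ ∨ η) - H(ξ))`. Hence
`H(⋁ᵢ G^{-i n} ξ) / L ≥ H(ξ) - N δ - 2 N² √δ`.
-/

open MeasureTheory Filter Finset Real Function Topology

namespace Real

lemma negMulLog_le_two_mul_sqrt {x : ℝ} (hx : 0 ≤ x) : negMulLog x ≤ 2 * √x := by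
  have hs : 0 ≤ √x := sqrt_nonneg x
  calc negMulLog x = 2 * √x * negMulLog √x := by
        rw [← mul_self_sqrt hx, negMulLog_mul, sqrt_mul_self hs]; ring
    _ ≤ 2 * √x * 1 := by
        gcongr
        linarith [negMulLog_le_one_sub_self hs]
    _ = 2 * √x := mul_one _

lemma negMulLog_le_negMulLog_add_sub {a b : ℝ} (ha : 0 ≤ a) (hab : a ≤ b) (hb : b ≤ 1) :
    negMulLog a ≤ negMulLog b + (b - a) := by
  rcases ha.eq_or_lt with rfl | ha
  · simpa using add_nonneg (negMulLog_nonneg hab hb) hab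
  have hb0 : 0 < b := ha.trans_le hab
  have hlog : a * (log b - log a) ≤ b - a := by
    rw [← log_div hb0.ne' ha.ne']
    calc a * log (b / a) ≤ a * (b / a - 1) := by gcongr; exact log_le_sub_one_of_pos (by positivity)
      _ = b - a := by field_simp
  have hblog : b * log b ≤ 0 := mul_nonpos_of_nonneg_of_nonpos hb0.le (log_nonpos hb0.le hb)
  simp only [negMulLog]
  nlinarith [log_le_log ha hab]

lemma sum_negMulLog_le_sum_neg_mul_log {ι : Type*} [Fintype ι] {p q : ι → ℝ} (hp : ∀ i, 0 ≤ p i)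
    (hq : ∀ i, 0 ≤ q i) (hpq : ∀ i, q i = 0 → p i = 0) (hsum : ∑ i, q i ≤ ∑ i, p i) :
    ∑ i, negMulLog (p i) ≤ ∑ i, -(p i * log (q i)) := by
  have key : ∀ i, negMulLog (p i) ≤ -(p i * log (q i)) + (q i - p i) := by
    intro i
    rcases (hp i).eq_or_lt with h | h
    · simp [← h, hq i]
    have hqi : 0 < q i := (hq i).lt_of_ne fun h' => h.ne' (hpq i h'.symm)
    have : p i * log (q i / p i) ≤ p i * (q i / p i - 1) := by
      gcongr; exact log_le_sub_one_of_pos (by positivity)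
    rw [log_div hqi.ne' h.ne', mul_sub, mul_sub, mul_div_cancel₀ _ h.ne'] at this
    simp only [negMulLog]
    linarith
  calc ∑ i, negMulLog (p i) ≤ ∑ i, (-(p i * log (q i)) + (q i - p i)) := sum_le_sum fun i _ => key i
    _ ≤ ∑ i, -(p i * log (q i)) := by
        rw [sum_add_distrib, sum_sub_distrib]; linarith

lemma negMulLog_sum_le_sum_negMulLog {ι : Type*} (s : Finset ι) {p : ι → ℝ}
    (hp : ∀ i ∈ s, 0 ≤ p i) : negMulLog (∑ i ∈ s, p i) ≤ ∑ i ∈ s, negMulLog (p i) := by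
  rw [negMulLog, neg_mul, sum_mul, ← sum_neg_distrib]
  refine sum_le_sum fun i hi => ?_
  rcases (hp i hi).eq_or_lt with h | h
  · simp [← h]
  have := log_le_log h (single_le_sum hp hi)
  simp only [negMulLog]
  nlinarith

lemma mul_log_prod {ι : Type*} (s : Finset ι) {p : ℝ} {x : ι → ℝ}
    (hx : ∀ i ∈ s, x i = 0 → p = 0) : p * log (∏ i ∈ s, x i) = ∑ i ∈ s, p * log (x i) := by
  by_cases hp : p = 0
  · simp [hp]
  rw [log_prod fun i hi h => hp (hx i hi h), mul_sum]

lemma exists_pos_mul_add_mul_sqrt_lt (c d : ℝ) {ε : ℝ} (hε : 0 < ε) :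
    ∃ δ > 0, c * δ + d * √δ < ε := by
  have hcont : Continuous fun δ : ℝ => c * δ + d * √δ := by fun_prop
  have h : Tendsto (fun δ : ℝ => c * δ + d * √δ) (𝓝[>] 0) (𝓝 0) := by
    simpa using (hcont.tendsto 0).mono_left nhdsWithin_le_nhds
  obtain ⟨δ, hδε, hδ⟩ := ((h.eventually (gt_mem_nhds hε)).and self_mem_nhdsWithin).exists
  exact ⟨δ, hδ, hδε⟩

end Real

section Partition

variable {Ω ι κ : Type*} [MeasurableSpace Ω]

def partJoin (C : ι → Set Ω) (D : κ → Set Ω) : ι × κ → Set Ω := fun ab => C ab.1 ∩ D ab.2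

def partIJoin (P : ι → κ → Set Ω) : (ι → κ) → Set Ω := fun f => ⋂ i, P i (f i)

namespace IsPartition

lemma exists_mem {C : ι → Set Ω} (hC : IsPartition C) (x : Ω) : ∃ i, x ∈ C i :=
  Set.mem_iUnion.1 (hC.2.2 ▸ Set.mem_univ x)

lemma partJoin {C : ι → Set Ω} {D : κ → Set Ω} (hC : IsPartition C) (hD : IsPartition D) :
    IsPartition (partJoin C D) := by
  refine ⟨fun ab => (hC.1 ab.1).inter (hD.1 ab.2), fun ab cd h => ?_, ?_⟩
  · by_cases h1 : ab.1 = cd.1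
    · have h2 : ab.2 ≠ cd.2 := fun h2 => h (Prod.ext h1 h2)
      exact (hD.2.1 h2).mono Set.inter_subset_right Set.inter_subset_right
    · exact (hC.2.1 h1).mono Set.inter_subset_left Set.inter_subset_left
  · refine Set.eq_univ_of_forall fun x => ?_
    obtain ⟨a, ha⟩ := hC.exists_mem x
    obtain ⟨b, hb⟩ := hD.exists_mem x
    exact Set.mem_iUnion.2 ⟨(a, b), ha, hb⟩

lemma partIJoin [Countable ι] {P : ι → κ → Set Ω} (hP : ∀ i, IsPartition (P i)) :
    IsPartition (partIJoin P) := by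
  refine ⟨fun f => .iInter fun i => (hP i).1 _, fun f g hfg => ?_, ?_⟩
  · obtain ⟨i, hi⟩ := Function.ne_iff.1 hfg
    exact ((hP i).2.1 hi).mono (Set.iInter_subset _ i) (Set.iInter_subset _ i)
  · refine Set.eq_univ_of_forall fun x => ?_
    choose f hf using fun i => (hP i).exists_mem x
    exact Set.mem_iUnion.2 ⟨f, Set.mem_iInter.2 hf⟩

lemma preimage {C : ι → Set Ω} (hC : IsPartition C) {f : Ω → Ω} (hf : Measurable f) :
    IsPartition fun i => f ⁻¹' C i :=
  ⟨fun i => hf (hC.1 i), fun _ _ hij => (hC.2.1 hij).preimage f, by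
    rw [← Set.preimage_iUnion, hC.2.2, Set.preimage_univ]⟩

variable {μ : Measure Ω}

lemma measure_eq_sum_fiber [DecidableEq ι] [Fintype κ] {Q : κ → Set Ω} (hQ : IsPartition Q)
    {R : ι → Set Ω} (hR : Pairwise (Disjoint on R)) {pr : κ → ι}
    (hsub : ∀ w, Q w ⊆ R (pr w)) (j : ι) :
    μ (R j) = ∑ w with pr w = j, μ (Q w) := by
  have hR_eq : R j = ⋃ w ∈ ({w | pr w = j} : Finset κ), Q w := by
    refine subset_antisymm (fun x hx => ?_) (Set.iUnion₂_subset fun w hw => ?_)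
    · obtain ⟨w, hw⟩ := hQ.exists_mem x
      have hpw : pr w = j := by_contra fun hne => Set.disjoint_left.1 (hR hne) (hsub w hw) hx
      exact Set.mem_biUnion (by simpa using hpw) hw
    · exact (mem_filter.1 hw).2 ▸ hsub w
  rw [hR_eq, measure_biUnion_finset (fun a _ b _ hab => hQ.2.1 hab) fun w _ => hQ.1 w]

lemma sum_toReal_mul_comp [IsFiniteMeasure μ] [Fintype ι] [Fintype κ] {Q : κ → Set Ω}
    (hQ : IsPartition Q) {R : ι → Set Ω} (hR : Pairwise (Disjoint on R)) {pr : κ → ι}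
    (hsub : ∀ w, Q w ⊆ R (pr w)) (c : ι → ℝ) :
    ∑ w, (μ (Q w)).toReal * c (pr w) = ∑ j, (μ (R j)).toReal * c j := by
  classical
  rw [← sum_fiberwise univ pr]
  refine sum_congr rfl fun j _ => ?_
  rw [hQ.measure_eq_sum_fiber hR hsub j, ENNReal.toReal_sum fun w _ => measure_ne_top μ _,
    sum_mul]
  exact sum_congr rfl fun w hw => by rw [(mem_filter.1 hw).2]

lemma sum_measure_inter [Fintype κ] {S : κ → Set Ω} (hS : IsPartition S) {A : Set Ω}
    (hA : MeasurableSet A) : ∑ b, μ (A ∩ S b) = μ A := by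
  have h := measure_iUnion (μ := μ) (fun a b hab => (hS.2.1 hab).mono
    Set.inter_subset_right Set.inter_subset_right) fun b => hA.inter (hS.1 b)
  rwa [← Set.inter_iUnion, hS.2.2, Set.inter_univ, tsum_fintype, eq_comm] at h

lemma sum_toReal [IsProbabilityMeasure μ] [Fintype ι] {C : ι → Set Ω} (hC : IsPartition C) :
    ∑ i, (μ (C i)).toReal = 1 := by
  have h : ∑ i, μ (C i) = 1 := by simpa using hC.sum_measure_inter (μ := μ) .univ
  rw [← ENNReal.toReal_sum fun i _ => measure_ne_top μ _, h, ENNReal.toReal_one]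

end IsPartition

end Partition

section Entropy

variable {Ω ι κ : Type*} [MeasurableSpace Ω] {μ : Measure Ω} [Fintype ι] [Fintype κ]

variable (μ) in
lemma partEntropy_eq_sum_negMulLog (C : ι → Set Ω) :
    partEntropy μ C = ∑ i, negMulLog (μ (C i)).toReal := by
  simp [partEntropy, negMulLog, ← sum_neg_distrib]

lemma partEntropy_preimage {f : Ω → Ω} (hf : MeasurePreserving f μ μ)
    {C : ι → Set Ω} (hC : ∀ i, MeasurableSet (C i)) :
    partEntropy μ (fun i => f ⁻¹' C i) = partEntropy μ C := by
  simp only [partEntropy, hf.measure_preimage (hC _).nullMeasurableSet]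

lemma partEntropy_eq_sum_neg_mul_log_comp [IsFiniteMeasure μ] {Q : κ → Set Ω} (hQ : IsPartition Q)
    {R : ι → Set Ω} (hR : Pairwise (Disjoint on R)) {pr : κ → ι}
    (hsub : ∀ w, Q w ⊆ R (pr w)) :
    partEntropy μ R = ∑ w, -((μ (Q w)).toReal * log (μ (R (pr w))).toReal) := by
  rw [sum_neg_distrib, hQ.sum_toReal_mul_comp hR hsub fun j => log (μ (R j)).toReal,
    partEntropy]

lemma partEntropy_le_of_subset_comp [IsFiniteMeasure μ] {Q : κ → Set Ω} (hQ : IsPartition Q)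
    {R : ι → Set Ω} (hR : Pairwise (Disjoint on R)) {pr : κ → ι}
    (hsub : ∀ w, Q w ⊆ R (pr w)) :
    partEntropy μ R ≤ partEntropy μ Q := by
  classical
  simp only [partEntropy_eq_sum_negMulLog]
  calc ∑ j, negMulLog (μ (R j)).toReal
      = ∑ j, negMulLog (∑ w with pr w = j, (μ (Q w)).toReal) := by
        simp only [hQ.measure_eq_sum_fiber hR hsub,
          ENNReal.toReal_sum fun w _ => measure_ne_top μ (Q w)]
    _ ≤ ∑ j, ∑ w with pr w = j, negMulLog (μ (Q w)).toReal :=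
        sum_le_sum fun j _ => negMulLog_sum_le_sum_negMulLog _ fun w _ => ENNReal.toReal_nonneg
    _ = ∑ w, negMulLog (μ (Q w)).toReal := sum_fiberwise _ _ _

lemma partEntropy_le_sum_neg_mul_log [IsProbabilityMeasure μ] {Q : κ → Set Ω} (hQ : IsPartition Q)
    {q : κ → ℝ} (hq : ∀ w, 0 ≤ q w) (hq_sum : ∑ w, q w ≤ 1)
    (hq_zero : ∀ w, q w = 0 → (μ (Q w)).toReal = 0) :
    partEntropy μ Q ≤ ∑ w, -((μ (Q w)).toReal * log (q w)) := by
  rw [partEntropy_eq_sum_negMulLog]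
  exact sum_negMulLog_le_sum_neg_mul_log (fun _ => ENNReal.toReal_nonneg) hq hq_zero
    (hq_sum.trans (hQ.sum_toReal (μ := μ)).ge)

lemma sum_neg_mul_log_prod_eq_sum_partEntropy [IsFiniteMeasure μ] [DecidableEq ι]
    {P : ι → κ → Set Ω} (hP : ∀ i, IsPartition (P i)) :
    ∑ f, -((μ (partIJoin P f)).toReal * log (∏ i, (μ (P i (f i))).toReal))
      = ∑ i, partEntropy μ (P i) := by
  have hsub : ∀ f i, partIJoin P f ⊆ P i (f i) := fun f i => Set.iInter_subset _ i
  have hzero : ∀ f i, (μ (P i (f i))).toReal = 0 → (μ (partIJoin P f)).toReal = 0 :=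
    fun f i => measureReal_mono_null (hsub f i)
  simp only [mul_log_prod _ fun i _ => hzero _ i, ← sum_neg_distrib]
  rw [sum_comm]
  exact sum_congr rfl fun i _ =>
    (partEntropy_eq_sum_neg_mul_log_comp (μ := μ) (.partIJoin hP) (hP i).2.1 (hsub · i)).symm

lemma partEntropy_partIJoin_le [IsProbabilityMeasure μ] [DecidableEq ι] {P : ι → κ → Set Ω}
    (hP : ∀ i, IsPartition (P i)) :
    partEntropy μ (partIJoin P) ≤ ∑ i, partEntropy μ (P i) := by
  rw [← sum_neg_mul_log_prod_eq_sum_partEntropy hP]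
  refine partEntropy_le_sum_neg_mul_log (IsPartition.partIJoin hP)
    (fun f => prod_nonneg fun i _ => ENNReal.toReal_nonneg) ?_ fun f hf => ?_
  · rw [← Fintype.prod_sum fun i b => (μ (P i b)).toReal]
    exact (prod_eq_one fun i _ => (hP i).sum_toReal).le
  · obtain ⟨i, -, hi⟩ := prod_eq_zero_iff.1 hf
    exact measureReal_mono_null (Set.iInter_subset _ i) hi

lemma partEntropy_partIJoin_of_measure_iInter [IsFiniteMeasure μ] [DecidableEq ι]
    {P : ι → κ → Set Ω} (hP : ∀ i, IsPartition (P i))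
    (hind : ∀ f, μ (partIJoin P f) = ∏ i, μ (P i (f i))) :
    partEntropy μ (partIJoin P) = ∑ i, partEntropy μ (P i) := by
  rw [← sum_neg_mul_log_prod_eq_sum_partEntropy hP, partEntropy, ← sum_neg_distrib]
  simp only [hind, ENNReal.toReal_prod]

end Entropy

section Chain

variable {Ω ι κ κ' : Type*} [MeasurableSpace Ω] {μ : Measure Ω} [IsProbabilityMeasure μ]
  [Fintype ι] [DecidableEq ι] [Fintype κ] [Fintype κ']

variable (μ) in
/-- The weight of `w` under the law in which the `S`-coordinates are conditionally independent
given the `P`-coordinates, with the `P`-coordinates jointly distributed as under `μ`. -/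
noncomputable def condIndepWeight (P : ι → κ → Set Ω) (S : ι → κ' → Set Ω)
    (w : ι → κ × κ') : ℝ :=
  (μ (partIJoin P fun i => (w i).1)).toReal *
    ∏ i, (μ (partJoin (P i) (S i) (w i))).toReal / (μ (P i (w i).1)).toReal

lemma sum_condIndepWeight_le_one {P : ι → κ → Set Ω} {S : ι → κ' → Set Ω}
    (hP : ∀ i, IsPartition (P i)) (hS : ∀ i, IsPartition (S i)) :
    ∑ w, condIndepWeight μ P S w ≤ 1 := by
  set r : ι → κ × κ' → ℝ :=
    fun i ab => (μ (partJoin (P i) (S i) ab)).toReal / (μ (P i ab.1)).toReal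
  have hr : ∀ i a, 0 ≤ ∑ b, r i (a, b) ∧ ∑ b, r i (a, b) ≤ 1 := fun i a => by
    simp only [r, partJoin, ← sum_div, ← ENNReal.toReal_sum fun b _ => measure_ne_top μ _,
      (hS i).sum_measure_inter ((hP i).1 a)]
    exact ⟨by positivity, div_self_le_one _⟩
  calc ∑ w, condIndepWeight μ P S w
      = ∑ f, (μ (partIJoin P f)).toReal * ∏ i, ∑ b, r i (f i, b) := by
        rw [← Fintype.sum_equiv (Equiv.arrowProdEquivProdArrow ι (fun _ => κ) fun _ => κ').symm
          (fun fg => (μ (partIJoin P fg.1)).toReal * ∏ i, r i (fg.1 i, fg.2 i)) _ fun _ => rfl,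
          Fintype.sum_prod_type]
        simp only [← mul_sum, Fintype.prod_sum]
    _ ≤ ∑ f, (μ (partIJoin P f)).toReal * 1 :=
        sum_le_sum fun f _ => mul_le_mul_of_nonneg_left
          (prod_le_one (fun i _ => (hr i _).1) fun i _ => (hr i _).2) ENNReal.toReal_nonneg
    _ = 1 := by simpa using (IsPartition.partIJoin hP).sum_toReal

lemma sum_neg_mul_log_condIndepWeight {P : ι → κ → Set Ω} {S : ι → κ' → Set Ω}
    (hP : ∀ i, IsPartition (P i)) (hS : ∀ i, IsPartition (S i)) :
    ∑ w, -((μ (partIJoin (fun i => partJoin (P i) (S i)) w)).toReal *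
        log (condIndepWeight μ P S w))
      = partEntropy μ (partIJoin P)
        + ∑ i, (partEntropy μ (partJoin (P i) (S i)) - partEntropy μ (P i)) := by
  set p := fun w => (μ (partIJoin (fun i => partJoin (P i) (S i)) w)).toReal
  have hsubP : ∀ w, partIJoin (fun i => partJoin (P i) (S i)) w ⊆ partIJoin P fun i => (w i).1 :=
    fun w => Set.iInter_mono fun i => Set.inter_subset_left
  have hsubJ : ∀ i w, partIJoin (fun i => partJoin (P i) (S i)) w ⊆ partJoin (P i) (S i) (w i) :=
    fun i w => Set.iInter_subset _ i
  have hsubPi : ∀ i w, partIJoin (fun i => partJoin (P i) (S i)) w ⊆ P i (w i).1 :=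
    fun i w => (hsubJ i w).trans Set.inter_subset_left
  have hpt : ∀ w, -(p w * log (condIndepWeight μ P S w))
      = -(p w * log (μ (partIJoin P fun i => (w i).1)).toReal)
        + ∑ i, (-(p w * log (μ (partJoin (P i) (S i) (w i))).toReal)
          - -(p w * log (μ (P i (w i).1)).toReal)) := fun w => by
    by_cases h0 : p w = 0
    · simp [h0]
    have h : 0 < p w := ENNReal.toReal_nonneg.lt_of_ne' h0
    have pos : ∀ s, partIJoin (fun i => partJoin (P i) (S i)) w ⊆ s → 0 < (μ s).toReal :=
      fun s hs => h.trans_le (measureReal_mono hs)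
    rw [condIndepWeight, log_mul (pos _ (hsubP w)).ne'
      (prod_pos fun i _ => div_pos (pos _ (hsubJ i w)) (pos _ (hsubPi i w))).ne',
      log_prod fun i _ => (div_pos (pos _ (hsubJ i w)) (pos _ (hsubPi i w))).ne']
    simp only [log_div (pos _ (hsubJ _ w)).ne' (pos _ (hsubPi _ w)).ne', mul_add, mul_sum,
      mul_sub, sum_sub_distrib, sub_neg_eq_add, sum_add_distrib, sum_neg_distrib]
    ring
  have hJoin := IsPartition.partIJoin fun i => (hP i).partJoin (hS i)
  rw [sum_congr rfl fun w _ => hpt w, sum_add_distrib, sum_comm,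
    partEntropy_eq_sum_neg_mul_log_comp hJoin (IsPartition.partIJoin hP).2.1 hsubP]
  congr 1
  refine sum_congr rfl fun i _ => ?_
  rw [partEntropy_eq_sum_neg_mul_log_comp hJoin ((hP i).partJoin (hS i)).2.1 (hsubJ i),
    partEntropy_eq_sum_neg_mul_log_comp hJoin (hP i).2.1 (hsubPi i), sum_sub_distrib]

lemma partEntropy_partIJoin_partJoin_le {P : ι → κ → Set Ω} {S : ι → κ' → Set Ω}
    (hP : ∀ i, IsPartition (P i)) (hS : ∀ i, IsPartition (S i)) :
    partEntropy μ (partIJoin fun i => partJoin (P i) (S i))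
      ≤ partEntropy μ (partIJoin P)
        + ∑ i, (partEntropy μ (partJoin (P i) (S i)) - partEntropy μ (P i)) := by
  rw [← sum_neg_mul_log_condIndepWeight hP hS]
  refine partEntropy_le_sum_neg_mul_log (IsPartition.partIJoin fun i => (hP i).partJoin (hS i))
    (fun w => by unfold condIndepWeight; positivity) (sum_condIndepWeight_le_one hP hS)
    fun w hw => ?_
  rcases mul_eq_zero.1 hw with h | h
  · exact measureReal_mono_null (Set.iInter_mono fun i => Set.inter_subset_left) h
  obtain ⟨i, -, hi⟩ := prod_eq_zero_iff.1 h
  rcases div_eq_zero_iff.1 hi with h | h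
  · exact measureReal_mono_null (Set.iInter_subset _ i) h
  · exact measureReal_mono_null ((Set.iInter_subset _ i).trans Set.inter_subset_left) h

end Chain

section Approximation

variable {Ω ι : Type*} [MeasurableSpace Ω] {μ : Measure Ω} [IsProbabilityMeasure μ]

lemma negMulLog_measure_inter_le_of_symmDiff_le [DecidableEq ι] {C D : ι → Set Ω}
    (hC : Pairwise (Disjoint on C)) {δ : ℝ} (hδ : ∀ i, (μ (symmDiff (C i) (D i))).toReal ≤ δ)
    (a b : ι) :
    negMulLog (μ (C a ∩ D b)).toReal
      ≤ (if a = b then negMulLog (μ (D b)).toReal + δ else 0) + 2 * √δ := by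
  have hdiff : (μ (D b \ C b)).toReal ≤ δ :=
    (measureReal_mono fun x hx => Or.inr hx).trans (hδ b)
  split_ifs with hab
  · subst hab
    have hsplit : (μ (D a)).toReal ≤ (μ (C a ∩ D a)).toReal + (μ (D a \ C a)).toReal := by
      rw [Set.inter_comm]
      exact (measureReal_mono (Set.inter_union_sdiff (D a) (C a)).ge).trans
        (measureReal_union_le _ _)
    have hle : negMulLog (μ (C a ∩ D a)).toReal
        ≤ negMulLog (μ (D a)).toReal + ((μ (D a)).toReal - (μ (C a ∩ D a)).toReal) :=
      negMulLog_le_negMulLog_add_sub ENNReal.toReal_nonneg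
        (measureReal_mono Set.inter_subset_right) measureReal_le_one
    linarith [sqrt_nonneg δ]
  · have hsub : C a ∩ D b ⊆ D b \ C b :=
      fun x hx => ⟨hx.2, fun hxb => Set.disjoint_left.1 (hC hab) hx.1 hxb⟩
    calc negMulLog (μ (C a ∩ D b)).toReal ≤ 2 * √(μ (C a ∩ D b)).toReal :=
          negMulLog_le_two_mul_sqrt ENNReal.toReal_nonneg
      _ ≤ 2 * √δ := by gcongr; exact (measureReal_mono hsub).trans hdiff
      _ = 0 + 2 * √δ := (zero_add _).symm

lemma partEntropy_partJoin_le_of_symmDiff_le [Fintype ι] {C D : ι → Set Ω}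
    (hC : Pairwise (Disjoint on C)) {δ : ℝ} (hδ : ∀ i, (μ (symmDiff (C i) (D i))).toReal ≤ δ) :
    partEntropy μ (partJoin C D)
      ≤ partEntropy μ D + (Fintype.card ι * δ + 2 * Fintype.card ι ^ 2 * √δ) := by
  classical
  simp only [partEntropy_eq_sum_negMulLog, partJoin, Fintype.sum_prod_type_right]
  calc ∑ b, ∑ a, negMulLog (μ (C a ∩ D b)).toReal
      ≤ ∑ b, ∑ a, ((if a = b then negMulLog (μ (D b)).toReal + δ else 0) + 2 * √δ) :=
        sum_le_sum fun b _ => sum_le_sum fun a _ =>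
          negMulLog_measure_inter_le_of_symmDiff_le hC hδ a b
    _ = ∑ b, negMulLog (μ (D b)).toReal + (Fintype.card ι * δ + 2 * Fintype.card ι ^ 2 * √δ) := by
        simp only [sum_add_distrib, sum_ite_eq', mem_univ, if_true, sum_const, card_univ,
          nsmul_eq_mul]
        ring

end Approximation

section Density

variable {Ω ι : Type*}

lemma symmDiff_disjointed_subset [Preorder ι] [LocallyFiniteOrderBot ι] {C B : ι → Set Ω}
    (hC : Pairwise (Disjoint on C)) (i : ι) :
    symmDiff (C i) (disjointed B i) ⊆ ⋃ j, symmDiff (C j) (B j) := by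
  intro x hx
  simp only [Set.mem_iUnion, Set.mem_symmDiff] at hx ⊢
  rcases hx with ⟨hxC, hxD⟩ | ⟨hxD, hxC⟩
  · by_cases hxB : x ∈ B i
    · simp only [disjointed_eq_inter_compl, Set.mem_inter_iff, Set.mem_iInter, Set.mem_compl_iff,
        not_and, not_forall, not_not] at hxD
      obtain ⟨j, hji, hxBj⟩ := hxD hxB
      exact ⟨j, Or.inr ⟨hxBj, fun hxCj => Set.disjoint_left.1 (hC hji.ne) hxCj hxC⟩⟩
    · exact ⟨i, Or.inl ⟨hxC, hxB⟩⟩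
  · exact ⟨i, Or.inr ⟨disjointed_subset B i hxD, hxC⟩⟩

lemma symmDiff_union_compl_iUnion_subset {C B : ι → Set Ω} (hC : ⋃ j, C j = Set.univ) (i : ι) :
    symmDiff (C i) (B i ∪ (⋃ j, B j)ᶜ) ⊆ ⋃ j, symmDiff (C j) (B j) := by
  intro x hx
  obtain ⟨m, hxm⟩ := Set.mem_iUnion.1 (hC ▸ Set.mem_univ x)
  simp only [Set.mem_iUnion, Set.mem_symmDiff, Set.mem_union, Set.mem_compl_iff,
    not_exists, not_or] at hx ⊢
  rcases hx with ⟨hxC, hxB, -⟩ | ⟨hxB | hxB, hxC⟩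
  · exact ⟨i, Or.inl ⟨hxC, hxB⟩⟩
  · exact ⟨i, Or.inr ⟨hxB, hxC⟩⟩
  · exact ⟨m, Or.inl ⟨hxm, hxB m⟩⟩

lemma IsPartition.exists_measurableSet_symmDiff_le [mΩ : MeasurableSpace Ω] {μ : Measure Ω}
    [Fintype ι] [LinearOrder ι] [LocallyFiniteOrderBot ι]
    {m : ℕ → MeasurableSpace Ω} (hm_mono : Monotone m) (hm_le : ∀ k, m k ≤ mΩ)
    (hm_dense : ∀ A : Set Ω, MeasurableSet A → ∀ ε : ℝ≥0∞, 0 < ε →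
      ∃ k, ∃ B : Set Ω, MeasurableSet[m k] B ∧ μ (symmDiff A B) < ε)
    {C : ι → Set Ω} (hC : IsPartition C) {ε : ℝ≥0∞} (hε : 0 < ε) :
    ∃ k, ∃ D : ι → Set Ω, (∀ i, MeasurableSet[m k] (D i)) ∧ IsPartition D ∧
      ∀ i, μ (symmDiff (C i) (D i)) ≤ ε := by
  choose k B hB hBC using fun i => hm_dense (C i) (hC.1 i) (ε / Fintype.card ι)
    (ENNReal.div_pos hε.ne' (ENNReal.natCast_ne_top _))
  set K := univ.sup k
  have hBK : ∀ i, MeasurableSet[m K] (B i) := fun i => hm_mono (le_sup (mem_univ i)) _ (hB i)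
  set B' := fun i => B i ∪ (⋃ j, B j)ᶜ
  have hB'K : ∀ i, MeasurableSet[m K] (B' i) :=
    fun i => (hBK i).union (MeasurableSet.iUnion hBK).compl
  have hDK : ∀ i, MeasurableSet[m K] (disjointed B' i) :=
    fun i => disjointedRec (fun _ j ht => ht.diff (hB'K j)) (hB'K i)
  refine ⟨K, disjointed B', hDK, ⟨fun i => hm_le K _ (hDK i), disjoint_disjointed B', ?_⟩,
    fun i => ?_⟩
  · refine iUnion_disjointed.trans (Set.eq_univ_of_forall fun x => ?_)
    by_cases hx : x ∈ ⋃ j, B j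
    · obtain ⟨j, hj⟩ := Set.mem_iUnion.1 hx
      exact Set.mem_iUnion.2 ⟨j, Or.inl hj⟩
    · obtain ⟨j, -⟩ := hC.exists_mem x
      exact Set.mem_iUnion.2 ⟨j, Or.inr hx⟩
  calc μ (symmDiff (C i) (disjointed B' i)) ≤ μ (⋃ j, symmDiff (C j) (B j)) :=
        measure_mono ((symmDiff_disjointed_subset hC.2.1 i).trans
          (Set.iUnion_subset (symmDiff_union_compl_iUnion_subset hC.2.2)))
    _ ≤ ∑ j, μ (symmDiff (C j) (B j)) := measure_iUnion_fintype_le μ _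
    _ ≤ ∑ _j : ι, ε / Fintype.card ι := sum_le_sum fun j _ => (hBC j).le
    _ ≤ ε := by simpa using ENNReal.mul_div_le

end Density

section Shifts

variable {Ω ι κ : Type*} [MeasurableSpace Ω] {μ : Measure Ω} [IsProbabilityMeasure μ]
  [Fintype ι] [DecidableEq ι] [Fintype κ] {T : ι → Ω → Ω}

lemma partEntropy_partIJoin_preimage_le (hT : ∀ i, MeasurePreserving (T i) μ μ)
    {C : κ → Set Ω} (hC : IsPartition C) :
    partEntropy μ (partIJoin fun i b => T i ⁻¹' C b) ≤ Fintype.card ι * partEntropy μ C := by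
  refine (partEntropy_partIJoin_le fun i => hC.preimage (hT i).measurable).trans_eq ?_
  simp [partEntropy_preimage (hT _) hC.1]

lemma le_partEntropy_partIJoin_preimage (hT : ∀ i, MeasurePreserving (T i) μ μ)
    {C D : κ → Set Ω} (hC : IsPartition C) (hD : IsPartition D)
    (hind : ∀ g, μ (partIJoin (fun i b => T i ⁻¹' D b) g) = ∏ i, μ (T i ⁻¹' D (g i))) :
    Fintype.card ι * (partEntropy μ D - (partEntropy μ (partJoin C D) - partEntropy μ C))
      ≤ partEntropy μ (partIJoin fun i b => T i ⁻¹' C b) := by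
  set P : ι → κ → Set Ω := fun i b => T i ⁻¹' C b
  set S : ι → κ → Set Ω := fun i b => T i ⁻¹' D b
  have hP : ∀ i, IsPartition (P i) := fun i => hC.preimage (hT i).measurable
  have hS : ∀ i, IsPartition (S i) := fun i => hD.preimage (hT i).measurable
  have hJ : ∀ i, IsPartition (partJoin (P i) (S i)) := fun i => (hP i).partJoin (hS i)
  have hPS_eq : ∀ i, partEntropy μ (partJoin (P i) (S i)) = partEntropy μ (partJoin C D) :=
    fun i => partEntropy_preimage (hT i) (hC.partJoin hD).1
  calc Fintype.card ι * (partEntropy μ D - (partEntropy μ (partJoin C D) - partEntropy μ C))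
      = partEntropy μ (partIJoin S)
        - ∑ i, (partEntropy μ (partJoin (P i) (S i)) - partEntropy μ (P i)) := by
        simp only [partEntropy_partIJoin_of_measure_iInter hS hind, hPS_eq, S, P,
          partEntropy_preimage (hT _) hC.1, partEntropy_preimage (hT _) hD.1, sum_const,
          card_univ, nsmul_eq_mul]
        ring
    _ ≤ partEntropy μ (partIJoin fun i => partJoin (P i) (S i))
        - ∑ i, (partEntropy μ (partJoin (P i) (S i)) - partEntropy μ (P i)) := by
        gcongr
        exact partEntropy_le_of_subset_comp (IsPartition.partIJoin hJ)
          (IsPartition.partIJoin hS).2.1 (pr := fun w i => (w i).2)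
          fun w => Set.iInter_mono fun i => Set.inter_subset_right
    _ ≤ partEntropy μ (partIJoin P) := by
        linarith [partEntropy_partIJoin_partJoin_le (μ := μ) hP hS]

end Shifts

lemma progEntropy_eq_partEntropy_partIJoin {Ω : Type*} [MeasurableSpace Ω] (μ : Measure Ω)
    (G : Equiv.Perm Ω) {N : ℕ} (n L : ℕ) (C : Fin N → Set Ω) :
    progEntropy μ G n L C
      = partEntropy μ (partIJoin fun (i : Fin L) b => ⇑(G ^ (((i : ℕ) + 1) * n)) ⁻¹' C b) :=
  rfl

theorem completely_positive_P_entropy_general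
    {Ω : Type*} [mΩ : MeasurableSpace Ω] (μ : Measure Ω) [IsProbabilityMeasure μ]
    (G : Equiv.Perm Ω)
    (hG : MeasurePreserving G μ μ)
    (𝔄 : ℕ → MeasurableSpace Ω) (h𝔄mono : Monotone 𝔄) (h𝔄le : ∀ k, 𝔄 k ≤ mΩ)
    (h𝔄dense : ∀ A : Set Ω, MeasurableSet A → ∀ ε : ℝ≥0∞, 0 < ε →
      ∃ k, ∃ B : Set Ω, MeasurableSet[𝔄 k] B ∧ μ (symmDiff A B) < ε)
    (n L : ℕ → ℕ) (hL_pos : ∀ k, 0 < L k)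
    (hindep : ∀ k, ProbabilityTheory.iIndep
      (fun i : Fin (L k) =>
        MeasurableSpace.comap (⇑(G ^ (((i : ℕ) + 1) * n k))) (𝔄 k)) μ) :
    ∀ (N : ℕ) (C : Fin N → Set Ω), IsPartition C →
      Tendsto (fun k : ℕ => progEntropy μ G (n k) (L k) C / (L k)) atTop
        (nhds (partEntropy μ C)) ∧
      (0 < partEntropy μ C →
        0 < limsup (fun k : ℕ => progEntropy μ G (n k) (L k) C / (L k)) atTop) := by
  intro N C hC
  have hT : ∀ k (i : Fin (L k)), MeasurePreserving (⇑(G ^ (((i : ℕ) + 1) * n k))) μ μ :=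
    fun k i => (Equiv.Perm.coe_pow G _).symm ▸ hG.iterate _
  have hL : ∀ k, (0 : ℝ) < L k := fun k => Nat.cast_pos.2 (hL_pos k)
  have h_upper : ∀ k, progEntropy μ G (n k) (L k) C / L k ≤ partEntropy μ C := fun k => by
    rw [div_le_iff₀ (hL k), mul_comm, progEntropy_eq_partEntropy_partIJoin]
    simpa only [Fintype.card_fin] using partEntropy_partIJoin_preimage_le (hT k) hC
  have h_lower : ∀ a < partEntropy μ C, ∀ᶠ k in atTop,
      a < progEntropy μ G (n k) (L k) C / L k := by
    intro a ha
    obtain ⟨δ, hδ, hδa⟩ := exists_pos_mul_add_mul_sqrt_lt N (2 * N ^ 2) (sub_pos.2 ha)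
    obtain ⟨k₀, D, hD𝔄, hD, hCD⟩ := hC.exists_measurableSet_symmDiff_le h𝔄mono h𝔄le h𝔄dense
      (ENNReal.ofReal_pos.2 hδ)
    have hCD_join := partEntropy_partJoin_le_of_symmDiff_le (μ := μ) hC.2.1
      fun i => ENNReal.toReal_le_of_le_ofReal hδ.le (hCD i)
    filter_upwards [eventually_ge_atTop k₀] with k hk
    have := le_partEntropy_partIJoin_preimage (hT k) hC hD
      fun g => (hindep k).meas_iInter fun i => ⟨D (g i), h𝔄mono hk _ (hD𝔄 _), rfl⟩
    rw [lt_div_iff₀ (hL k), progEntropy_eq_partEntropy_partIJoin]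
    simp only [Fintype.card_fin] at this hCD_join
    nlinarith [hL k]
  have hlim := tendsto_order.2 ⟨h_lower, fun a ha => .of_forall fun k => (h_upper k).trans_lt ha⟩
  exact ⟨hlim, fun hpos => hlim.limsup_eq ▸ hpos⟩

/-- If a dense increasing sequence of sub-σ-algebras `𝔄_k` satisfies that the shifted copies
`G^{-i·n(k)} 𝔄_k`, `i = 1, …, L(k)`, are mutually independent, then the normalized entropy
along the progressions `{n(k), 2n(k), …, L(k)n(k)}` tends to `H(ξ)` for every finite
measurable partition `ξ`; in particular the limit is positive whenever `H(ξ) > 0`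
(completely positive `P`-entropy). -/
theorem completely_positive_P_entropy
    {Ω : Type*} [mΩ : MeasurableSpace Ω] (μ : Measure Ω) [IsProbabilityMeasure μ]
    (G : Equiv.Perm Ω)
    (hG : MeasurePreserving G μ μ) (hG' : MeasurePreserving G.symm μ μ)
    (𝔄 : ℕ → MeasurableSpace Ω) (h𝔄mono : Monotone 𝔄) (h𝔄le : ∀ k, 𝔄 k ≤ mΩ)
    (h𝔄dense : ∀ A : Set Ω, MeasurableSet A → ∀ ε : ℝ≥0∞, 0 < ε →
      ∃ k, ∃ B : Set Ω, MeasurableSet[𝔄 k] B ∧ μ (symmDiff A B) < ε)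
    (n L : ℕ → ℕ) (hn_pos : ∀ k, 0 < n k) (hL_pos : ∀ k, 0 < L k)
    (hn : Tendsto n atTop atTop) (hL : Tendsto L atTop atTop)
    (hindep : ∀ k, ProbabilityTheory.iIndep
      (fun i : Fin (L k) =>
        MeasurableSpace.comap (⇑(G ^ (((i : ℕ) + 1) * n k))) (𝔄 k)) μ) :
    ∀ (N : ℕ) (C : Fin N → Set Ω), IsPartition C →
      Tendsto (fun k : ℕ => progEntropy μ G (n k) (L k) C / (L k)) atTop
        (nhds (partEntropy μ C)) ∧
      (0 < partEntropy μ C →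
        0 < limsup (fun k : ℕ => progEntropy μ G (n k) (L k) C / (L k)) atTop) :=
  completely_positive_P_entropy_general (mΩ := mΩ) μ G hG 𝔄 h𝔄mono h𝔄le h𝔄dense n L hL_pos hindep
end

section
/- For every finitely supported sequence a : ℕ →₀ ℝ, the pushforward of μ under the functional ℓ_a is the Gaussian measure on ℝ with mean 0 and variance Σ_n a_n², i.e. μ.map ℓ_a = gaussianReal 0 (Σ_n a_n²). -/
open MeasureTheory Filter
open scoped ENNReal

/-- The measurable linear functional `ℓ_a(x) = Σ_n a_n · x_n` on `ℝ^ℕ` associated with a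
finitely supported sequence `a`. -/
noncomputable def ell (a : ℕ →₀ ℝ) (x : ℕ → ℝ) : ℝ :=
  ∑ n ∈ a.support, a n * x n

/-- `μ` is the infinite product on `ℝ^ℕ` of standard Gaussian measures: it is a probability
measure whose finite-dimensional marginals are the corresponding finite products of
`gaussianReal 0 1`. -/
def IsGaussianProduct (μ : Measure (ℕ → ℝ)) : Prop :=
  IsProbabilityMeasure μ ∧
    ∀ s : Finset ℕ,
      μ.map (fun x (i : ↥s) => x i) =
        Measure.pi (fun _ : ↥s => ProbabilityTheory.gaussianReal 0 1)

/-! On the finite marginal over `a.support` the terms `a n * x n` are independent centred Gaussians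
of variances `a n ^ 2`; characteristic functions of independent variables multiply, so the
variances of the summands add. -/

open ProbabilityTheory
open scoped NNReal

lemma ProbabilityTheory.iIndepFun.map_sum_eq_gaussianReal {Ω ι : Type*} [MeasurableSpace Ω]
    {P : Measure Ω} [IsProbabilityMeasure P] [Fintype ι] {X : ι → Ω → ℝ} (hX : iIndepFun X P)
    {m : ι → ℝ} {v : ι → ℝ≥0} (hlaw : ∀ i, P.map (X i) = gaussianReal (m i) (v i)) :
    P.map (∑ i, X i) = gaussianReal (∑ i, m i) (∑ i, v i) := by
  have hmeas : ∀ i, AEMeasurable (X i) P := fun i =>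
    AEMeasurable.of_map_ne_zero (by simp [hlaw i, NeZero.ne])
  refine Measure.ext_of_charFun (funext fun t => ?_)
  rw [hX.charFun_map_sum_eq_prod hmeas, Finset.prod_apply]
  simp_rw [hlaw, charFun_gaussianReal, ← Complex.exp_sum]
  congr 1
  push_cast
  simp only [Finset.sum_sub_distrib, Finset.mul_sum, Finset.sum_mul, Finset.sum_div]

lemma map_pi_gaussianReal_sum_mul {ι : Type*} [Fintype ι] (m : ι → ℝ) (v : ι → ℝ≥0)
    (c : ι → ℝ) :
    (Measure.pi fun i => gaussianReal (m i) (v i)).map (fun y => ∑ i, c i * y i) =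
      gaussianReal (∑ i, c i * m i) (∑ i, ‖c i‖₊ ^ 2 * v i) := by
  have hindep : iIndepFun (fun i (y : ι → ℝ) => c i * y i)
      (Measure.pi fun i => gaussianReal (m i) (v i)) :=
    iIndepFun_pi (X := fun i x => c i * x) fun i => by fun_prop
  convert hindep.map_sum_eq_gaussianReal fun i => ?_ using 2
  · ext y
    simp
  rw [show (fun y : ι → ℝ => c i * y i) = (c i * ·) ∘ Function.eval i from rfl,
    ← Measure.map_map (by fun_prop) (by fun_prop), (measurePreserving_eval _ i).map_eq,
    gaussianReal_map_const_mul]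
  congr 1
  ext
  simp

/-- The pushforward of the Gaussian product measure under `ℓ_a` is the Gaussian measure
with mean `0` and variance `Σ_n a_n²`. -/
theorem map_ell_eq_gaussianReal
    (μ : Measure (ℕ → ℝ)) (hμ : IsGaussianProduct μ) (a : ℕ →₀ ℝ) :
    μ.map (ell a) = ProbabilityTheory.gaussianReal 0 (∑ n ∈ a.support, ‖a n‖₊ ^ 2) := by
  have hell : ell a =
      (fun y : a.support → ℝ => ∑ i : a.support, a i * y i) ∘ fun x i => x i := by
    funext x
    exact (Finset.sum_coe_sort a.support fun n => a n * x n).symm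
  rw [hell, ← Measure.map_map (by fun_prop) (by fun_prop), hμ.2, map_pi_gaussianReal_sum_mul]
  simp only [mul_zero, Finset.sum_const_zero, mul_one]
  rw [Finset.sum_coe_sort a.support fun n => ‖a n‖₊ ^ 2]
end
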